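/- Let D be a finite TBA generated as a Boolean algebra by its closed elements, with top element X. Define a relation on the set P of atoms of D by q < p iff X_q ⊆ (X_p)'. Then < is transitive and antisymmetric (so P is a PO system), and the atoms form a complete P-partition of X: (X_p)' = ⋃_{q<p} X_q for all p. -/

import Mathlib

open scoped Classical

/-!
For an atom `p`, the map `b ↦ (p ≤ b)` is a Boolean homomorphism to `Prop`. So two atoms lying
below the same closed elements lie below the same elements of the Boolean algebra generated by
the closed elements, i.e. below the same elements, and hence coincide. If `q ≤ p'` and `p ≤ q'`,
then `p` and `q` do lie below the same closed elements: `p ≤ a` gives `q ≤ p' ≤ a' ≤ a`.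
-/

theorem IsAtom.le_compl_iff_not_le {α : Type*} [BooleanAlgebra α] {a b : α} (ha : IsAtom a) :
    a ≤ bᶜ ↔ ¬ a ≤ b := by
  rw [le_compl_iff_disjoint_right, ha.not_le_iff_disjoint]

theorem IsAtom.le_sup_iff {α : Type*} [DistribLattice α] [OrderBot α] {a b c : α}
    (ha : IsAtom a) : a ≤ b ⊔ c ↔ a ≤ b ∨ a ≤ c := by
  refine ⟨fun h => ?_, fun h => h.elim le_sup_of_le_left le_sup_of_le_right⟩
  by_contra! hbc
  have hdisj : Disjoint a (b ⊔ c) :=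
    disjoint_sup_right.2 ⟨ha.not_le_iff_disjoint.1 hbc.1, ha.not_le_iff_disjoint.1 hbc.2⟩
  exact ha.1 (hdisj.eq_bot_of_le h)

theorem IsAtom.eq_of_le_iff_of_generates {α : Type*} [BooleanAlgebra α] {G : Set α}
    (hgen : ∀ S : Set α, G ⊆ S → ⊥ ∈ S →
      (∀ a ∈ S, aᶜ ∈ S) → (∀ a b, a ∈ S → b ∈ S → a ⊔ b ∈ S) → ∀ x, x ∈ S)
    {p q : α} (hp : IsAtom p) (hq : IsAtom q) (hG : ∀ a ∈ G, p ≤ a ↔ q ≤ a) : p = q := by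
  have hsep : ∀ x, p ≤ x ↔ q ≤ x := by
    refine hgen {x | p ≤ x ↔ q ≤ x} hG ?_ ?_ ?_
    · simp only [Set.mem_ofPred_eq, le_bot_iff, hp.ne_bot, hq.ne_bot]
    · intro a ha
      simpa only [Set.mem_ofPred_eq, hp.le_compl_iff_not_le, hq.le_compl_iff_not_le] using ha.not
    · intro a b ha hb
      simpa only [Set.mem_ofPred_eq, hp.le_sup_iff, hq.le_sup_iff] using or_congr ha hb
  exact ((hp.le_iff.1 ((hsep p).1 le_rfl)).resolve_left hq.ne_bot).symm

instance BooleanAlgebra.isAtomistic_of_fintype {α : Type*} [BooleanAlgebra α] [Fintype α] :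
    IsAtomistic α :=
  letI := Fintype.toCompleteAtomicBooleanAlgebra α
  inferInstance

theorem finsetSup_atoms_le_eq {α : Type*} [Lattice α] [OrderBot α] [IsAtomistic α] [Fintype α]
    (x : α) : (Finset.univ.filter fun a : α => IsAtom a ∧ a ≤ x).sup id = x :=
  Finset.isLUB_sup_id.unique (by simpa using isLUB_atoms_le x)

theorem monotone_of_map_sup {α : Type*} [SemilatticeSup α] {f : α → α}
    (hf : ∀ a b, f (a ⊔ b) = f a ⊔ f b) : Monotone f := fun a b hab => by
  simpa [sup_eq_right.2 hab] using (hf a b).symm.le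

theorem finite_TBA_atoms_form_complete_partition_general
    {D : Type*} [BooleanAlgebra D] [Fintype D] (d : D → D)
    (hsup : ∀ a b, d (a ⊔ b) = d a ⊔ d b)
    (hidem : ∀ a, d (d a) ≤ d a)
    (hgen : ∀ S : Set D, {a | d a ≤ a} ⊆ S → ⊥ ∈ S →
      (∀ a ∈ S, aᶜ ∈ S) → (∀ a b, a ∈ S → b ∈ S → a ⊔ b ∈ S) → ∀ x, x ∈ S) :
    (∀ p q r : D, IsAtom p → IsAtom q → IsAtom r → q ≤ d p → r ≤ d q → r ≤ d p) ∧
    (∀ p q : D, IsAtom p → IsAtom q → q ≤ d p → p ≤ d q → p = q) ∧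
    (∀ p : D, IsAtom p →
      d p = (Finset.univ.filter (fun q : D => IsAtom q ∧ q ≤ d p)).sup id) := by
  have hmono : Monotone d := monotone_of_map_sup hsup
  refine ⟨fun p q r _ _ _ hqp hrq => hrq.trans ((hmono hqp).trans (hidem p)), ?_,
    fun p _ => (finsetSup_atoms_le_eq (d p)).symm⟩
  intro p q hp hq hqp hpq
  refine hp.eq_of_le_iff_of_generates hgen hq fun a (ha : d a ≤ a) => ⟨fun h => ?_, fun h => ?_⟩
  · exact hqp.trans ((hmono h).trans ha)
  · exact hpq.trans ((hmono h).trans ha)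

/-- Let `D` be a finite TBA generated as a Boolean algebra by its closed elements.
Define `q < p` on atoms by `q ≤ p'`. Then `<` is transitive and antisymmetric (so the
atoms form a PO system), and the derived element of each atom `p` is exactly the
supremum of the atoms `q < p`: the atoms form a complete `P`-partition of the top. -/
theorem finite_TBA_atoms_form_complete_partition
    {D : Type*} [BooleanAlgebra D] [Fintype D] (d : D → D)
    (h0 : d ⊥ = ⊥)
    (hsup : ∀ a b, d (a ⊔ b) = d a ⊔ d b)
    (hidem : ∀ a, d (d a) ≤ d a)
    (hgen : ∀ S : Set D, {a | d a ≤ a} ⊆ S → ⊥ ∈ S →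
      (∀ a ∈ S, aᶜ ∈ S) → (∀ a b, a ∈ S → b ∈ S → a ⊔ b ∈ S) → ∀ x, x ∈ S) :
    (∀ p q r : D, IsAtom p → IsAtom q → IsAtom r → q ≤ d p → r ≤ d q → r ≤ d p) ∧
    (∀ p q : D, IsAtom p → IsAtom q → q ≤ d p → p ≤ d q → p = q) ∧
    (∀ p : D, IsAtom p →
      d p = (Finset.univ.filter (fun q : D => IsAtom q ∧ q ≤ d p)).sup id) :=
  finite_TBA_atoms_form_complete_partition_general d hsup hidem hgen
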